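/- arXiv:2510.18186 — 4 statements merged into one kernel-verified Lean document; each statement's English description precedes it below -/
import Mathlib

section
/- For every s ∈ ℂ with |s| = 1, both Squier matrices preserve the Squier form: βᵢ(s)ᴴ · J(s) · βᵢ(s) = J(s) for i = 1, 2, where βᵢ(s)ᴴ denotes the conjugate transpose and J(s) = [[s + s⁻¹, −1],[−1, s + s⁻¹]] (note s + s⁻¹ = 2·Re(s) is real when |s| = 1). -/
open Matrix

/-- Squier matrix for σ₁. -/
def beta1 (s : ℂ) : Matrix (Fin 2) (Fin 2) ℂ := !![-s^2, s; 0, 1]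

/-- Squier matrix for σ₂. -/
def beta2 (s : ℂ) : Matrix (Fin 2) (Fin 2) ℂ := !![1, 0; s, -s^2]

/-- Squier's Hermitian form at parameter s. -/
noncomputable def squierJ (s : ℂ) : Matrix (Fin 2) (Fin 2) ℂ :=
  !![s + s⁻¹, -1; -1, s + s⁻¹]

/-- For |s| = 1, both Squier matrices preserve the Squier form:
βᵢ(s)ᴴ · J(s) · βᵢ(s) = J(s) for i = 1, 2. -/
theorem squier_J_unitarity (s : ℂ) (hs : ‖s‖ = 1) :
    (beta1 s)ᴴ * squierJ s * beta1 s = squierJ s ∧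
    (beta2 s)ᴴ * squierJ s * beta2 s = squierJ s := by
  have hs0 : s ≠ 0 := by
    intro h; simp [h] at hs
  have hc : (starRingEnd ℂ) s = s⁻¹ := by
    rw [Complex.inv_def]
    simp [Complex.normSq_eq_norm_sq, hs]
  have hinv : s * s⁻¹ = 1 := mul_inv_cancel₀ hs0
  constructor <;>
  · ext i j
    fin_cases i <;> fin_cases j <;>
      simp [beta1, beta2, squierJ, Matrix.mul_apply, Fin.sum_univ_two, hc] <;>
      field_simp <;> ring
end

section
/- For every ω ∈ (−2π/3, 2π/3), with R(ω) = (1/√2)·[[√(2cos(ω/2)−1), √(2cos(ω/2)−1)], [√(2cos(ω/2)+1), −√(2cos(ω/2)+1)]] and s = e^{iω/2}, the unitarized mixer of the braid word σ₁σ₂σ₁ is diagonal: R(ω)·(β₁(s)·β₂(s)·β₁(s))·R(ω)⁻¹ = −e^{3iω/2}·diag(1, −1). In particular this matrix is unitary. -/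
open Matrix Real

/-- The Cholesky-type factor R(ω) of the Squier form J(ω), as a complex matrix. -/
noncomputable def RfacC (ω : ℝ) : Matrix (Fin 2) (Fin 2) ℂ :=
  ((1 : ℂ) / Real.sqrt 2) •
    !![(Real.sqrt (2 * Real.cos (ω / 2) - 1) : ℂ),
       (Real.sqrt (2 * Real.cos (ω / 2) - 1) : ℂ);
       (Real.sqrt (2 * Real.cos (ω / 2) + 1) : ℂ),
       -(Real.sqrt (2 * Real.cos (ω / 2) + 1) : ℂ)]

/-- Within the positivity window, the unitarized mixer of the braid word σ₁σ₂σ₁ at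
s = e^{iω/2} is diagonal: R(ω)·β₁β₂β₁·R(ω)⁻¹ = −e^{3iω/2}·diag(1, −1); in particular,
this matrix is unitary. -/
theorem mixer_diagonal (ω : ℝ) (hω : ω ∈ Set.Ioo (-(2 * π / 3)) (2 * π / 3)) :
    RfacC ω *
        (beta1 (Complex.exp (Complex.I * ω / 2)) *
          beta2 (Complex.exp (Complex.I * ω / 2)) *
          beta1 (Complex.exp (Complex.I * ω / 2))) *
        (RfacC ω)⁻¹ =
      (-Complex.exp (3 * Complex.I * ω / 2)) • !![(1 : ℂ), 0; 0, -1] ∧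
    ((-Complex.exp (3 * Complex.I * ω / 2)) • !![(1 : ℂ), 0; 0, -1]) ∈
      Matrix.unitaryGroup (Fin 2) ℂ := by
  obtain ⟨h1, h2⟩ := hω
  set s : ℂ := Complex.exp (Complex.I * ω / 2) with hs
  have hcos : 1 / 2 < Real.cos (ω / 2) := by
    have habs : |ω / 2| < π / 3 := by
      rw [abs_lt]; constructor <;> linarith
    have h := Real.cos_lt_cos_of_nonneg_of_le_pi (abs_nonneg (ω/2))
      (by linarith [Real.pi_pos] : π/3 ≤ π) habs
    rwa [Real.cos_pi_div_three, Real.cos_abs] at h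
  have hA : (Real.sqrt (2 * Real.cos (ω / 2) - 1) : ℝ) ≠ 0 :=
    ne_of_gt (Real.sqrt_pos.mpr (by linarith))
  have hB : (Real.sqrt (2 * Real.cos (ω / 2) + 1) : ℝ) ≠ 0 :=
    ne_of_gt (Real.sqrt_pos.mpr (by linarith))
  have hs3 : s ^ 3 = Complex.exp (3 * Complex.I * ω / 2) := by
    rw [hs, ← Complex.exp_nat_mul]
    ring_nf
  have hprod : beta1 s * beta2 s * beta1 s = !![0, -s^3; -s^3, 0] := by
    ext i j
    fin_cases i <;> fin_cases j <;>
      simp [beta1, beta2, Matrix.mul_apply, Fin.sum_univ_two] <;>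
      (first | exact Or.inl (by ring) | ring)
  have hkey : RfacC ω * !![0, -s^3; -s^3, 0] =
      ((-Complex.exp (3 * Complex.I * ω / 2)) • !![(1:ℂ), 0; 0, -1]) * RfacC ω := by
    ext i j
    fin_cases i <;> fin_cases j <;>
      simp [RfacC, Matrix.mul_apply, Fin.sum_univ_two, hs3.symm] <;>
      (first | exact Or.inl (by ring) | ring)
  have hc2 : ((1:ℂ) / (Real.sqrt 2 : ℝ)) ^ 2 = 1 / 2 := by
    rw [div_pow, one_pow, ← Complex.ofReal_pow, Real.sq_sqrt (by norm_num : (0:ℝ) ≤ 2)]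
    norm_num
  have hdetval : (RfacC ω).det =
      -(((Real.sqrt (2 * Real.cos (ω/2) - 1) : ℝ) : ℂ) *
        ((Real.sqrt (2 * Real.cos (ω/2) + 1) : ℝ) : ℂ)) := by
    rw [RfacC, Matrix.det_smul, Matrix.det_fin_two_of]
    simp only [Fintype.card_fin, hc2]
    ring
  have hdet : IsUnit (RfacC ω).det := by
    rw [isUnit_iff_ne_zero, hdetval]
    simp only [ne_eq, neg_eq_zero, mul_eq_zero, Complex.ofReal_eq_zero]
    tauto
  have hinv : RfacC ω * (RfacC ω)⁻¹ = 1 := Matrix.mul_nonsing_inv _ hdet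
  have hgen : ∀ z : ℂ, (starRingEnd ℂ) z = -z →
      Complex.exp z * (starRingEnd ℂ) (Complex.exp z) = 1 := by
    intro z h
    rw [← Complex.exp_conj, h, ← Complex.exp_add]
    simp
  constructor
  · rw [hprod, hkey, Matrix.mul_assoc, hinv, Matrix.mul_one]
  · rw [Matrix.mem_unitaryGroup_iff]
    ext i j
    fin_cases i <;> fin_cases j <;>
      simp [Matrix.mul_apply, Fin.sum_univ_two, Matrix.star_apply, mul_comm] <;>
      exact hgen _ (by
        simp [map_div₀, Complex.conj_I, Complex.conj_ofReal, map_ofNat]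
        ring)
end

section
/- Let θ₁, θ₂ ∈ ℝ with |θ₁ − θ₂| ≤ π, and let V be a 2×2 unitary complex matrix whose eigenvalues are e^{iθ₁} and e^{iθ₂}. Then the minimum of |⟨ψ, Vψ⟩| over unit vectors ψ ∈ ℂ² exists and equals cos((θ₁ − θ₂)/2); that is, cos((θ₁−θ₂)/2) is the distance from the origin to the numerical range of V. -/
open Matrix

lemma eigen_exists (V : Matrix (Fin 2) (Fin 2) ℂ) (μ : ℂ) (h : μ ∈ spectrum ℂ V) :
    ∃ w : Fin 2 → ℂ, w ≠ 0 ∧ V *ᵥ w = μ • w := by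
  rw [spectrum.mem_iff, Matrix.isUnit_iff_isUnit_det, isUnit_iff_ne_zero, not_not,
    ← Matrix.exists_mulVec_eq_zero_iff] at h
  obtain ⟨w, hw, h⟩ := h
  refine ⟨w, hw, ?_⟩
  rw [sub_mulVec] at h
  have : (algebraMap ℂ (Matrix (Fin 2) (Fin 2) ℂ) μ) *ᵥ w = μ • w := by
    funext i; simp [Matrix.algebraMap_eq_diagonal, Matrix.mulVec_diagonal, Pi.algebraMap_apply]
  rw [this, sub_eq_zero] at h
  exact h.symm

lemma mem_spectrum_of_eigen (V : Matrix (Fin 2) (Fin 2) ℂ) (μ : ℂ) (w : Fin 2 → ℂ) (hw : w ≠ 0)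
    (h : V *ᵥ w = μ • w) : μ ∈ spectrum ℂ V := by
  rw [spectrum.mem_iff, Matrix.isUnit_iff_isUnit_det, isUnit_iff_ne_zero, not_not,
    ← Matrix.exists_mulVec_eq_zero_iff]
  refine ⟨w, hw, ?_⟩
  rw [sub_mulVec]
  have : (algebraMap ℂ (Matrix (Fin 2) (Fin 2) ℂ) μ) *ᵥ w = μ • w := by
    funext i; simp [Matrix.algebraMap_eq_diagonal, Matrix.mulVec_diagonal, Pi.algebraMap_apply]
  rw [this, h, sub_self]

lemma dot_self_real (x : Fin 2 → ℂ) :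
    star x ⬝ᵥ x = ((Complex.normSq (x 0) + Complex.normSq (x 1) : ℝ) : ℂ) := by
  simp only [dotProduct, Fin.sum_univ_two, Pi.star_apply, Complex.star_def,
    Complex.normSq_eq_conj_mul_self, Complex.ofReal_add]

lemma normSq_sum_pos (x : Fin 2 → ℂ) (hx : x ≠ 0) :
    0 < Complex.normSq (x 0) + Complex.normSq (x 1) := by
  rcases (by
    by_contra h
    push_neg at h
    apply hx
    funext i
    fin_cases i <;> simp_all [funext_iff, Fin.forall_fin_two] : x 0 ≠ 0 ∨ x 1 ≠ 0) with h | h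
  · have := Complex.normSq_pos.2 h
    have := Complex.normSq_nonneg (x 1)
    linarith
  · have := Complex.normSq_pos.2 h
    have := Complex.normSq_nonneg (x 0)
    linarith

lemma ortho_span (w : Fin 2 → ℂ) (hw : w ≠ 0) (x : Fin 2 → ℂ)
    (h : star w ⬝ᵥ x = 0) :
    ∃ c : ℂ, x = c • ![-(starRingEnd ℂ) (w 1), (starRingEnd ℂ) (w 0)] := by
  have h' : (starRingEnd ℂ) (w 0) * x 0 + (starRingEnd ℂ) (w 1) * x 1 = 0 := by
    simpa [dotProduct, Fin.sum_univ_two, Complex.star_def] using h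
  by_cases h0 : w 0 = 0
  · have h1 : w 1 ≠ 0 := by
      intro h1; apply hw; funext i; fin_cases i <;> simp [h0, h1]
    have hx1 : x 1 = 0 := by
      have : (starRingEnd ℂ) (w 1) ≠ 0 := by simpa using h1
      rw [h0, map_zero, zero_mul, zero_add] at h'
      exact (mul_eq_zero.1 h').resolve_left this
    refine ⟨x 0 / (-(starRingEnd ℂ) (w 1)), ?_⟩
    funext i
    fin_cases i <;> simp [hx1, h0]
    · have h1c : (starRingEnd ℂ) (w 1) ≠ 0 := by simpa using h1
      rw [div_neg, neg_mul, neg_neg, div_mul_cancel₀ _ h1c]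
  · refine ⟨x 1 / (starRingEnd ℂ) (w 0), ?_⟩
    have hc0 : (starRingEnd ℂ) (w 0) ≠ 0 := by simpa using h0
    funext i
    fin_cases i
    · show x 0 = x 1 / (starRingEnd ℂ) (w 0) * (-(starRingEnd ℂ) (w 1))
      field_simp
      linear_combination h'
    · show x 1 = x 1 / (starRingEnd ℂ) (w 0) * ((starRingEnd ℂ) (w 0))
      field_simp

lemma aux_lb (θ₁ θ₂ : ℝ) (hθ : |θ₁ - θ₂| ≤ Real.pi) (t s : ℝ) (ht : 0 ≤ t) (hs : 0 ≤ s)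
    (hts : t + s = 1) :
    Real.cos ((θ₁ - θ₂) / 2) ≤
      ‖(t : ℂ) * Complex.exp (Complex.I * θ₁) + (s : ℂ) * Complex.exp (Complex.I * θ₂)‖ := by
  have hc : 0 ≤ Real.cos ((θ₁ - θ₂) / 2) := by
    apply Real.cos_nonneg_of_mem_Icc
    constructor
    · have := neg_le_of_abs_le hθ; linarith
    · have := le_of_abs_le hθ; linarith
  set z := (t : ℂ) * Complex.exp (Complex.I * θ₁) + (s : ℂ) * Complex.exp (Complex.I * θ₂) with hz
  have hre : z.re = t * Real.cos θ₁ + s * Real.cos θ₂ := by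
    simp [hz, mul_comm Complex.I, Complex.exp_mul_I, Complex.cos_ofReal_re]
  have him : z.im = t * Real.sin θ₁ + s * Real.sin θ₂ := by
    simp [hz, mul_comm Complex.I, Complex.exp_mul_I, Complex.sin_ofReal_re]
  rw [Complex.norm_def, Complex.normSq_apply, hre, him]
  rw [show Real.cos ((θ₁ - θ₂) / 2) = Real.sqrt (Real.cos ((θ₁ - θ₂) / 2) ^ 2) from
    (Real.sqrt_sq hc).symm]
  apply Real.sqrt_le_sqrt
  have h1 : Real.cos ((θ₁ - θ₂) / 2) ^ 2 = 1 / 2 + Real.cos (θ₁ - θ₂) / 2 := by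
    have := Real.cos_sq ((θ₁ - θ₂) / 2)
    rwa [show 2 * ((θ₁ - θ₂) / 2) = θ₁ - θ₂ by ring] at this
  have h2 : Real.cos (θ₁ - θ₂) = Real.cos θ₁ * Real.cos θ₂ + Real.sin θ₁ * Real.sin θ₂ :=
    Real.cos_sub _ _
  have h3 : Real.sin θ₁ ^ 2 + Real.cos θ₁ ^ 2 = 1 := Real.sin_sq_add_cos_sq _
  have h4 : Real.sin θ₂ ^ 2 + Real.cos θ₂ ^ 2 = 1 := Real.sin_sq_add_cos_sq _
  have h5 : Real.cos (θ₁ - θ₂) ≤ 1 := Real.cos_le_one _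
  have hRHS : (t * Real.cos θ₁ + s * Real.cos θ₂) * (t * Real.cos θ₁ + s * Real.cos θ₂) +
      (t * Real.sin θ₁ + s * Real.sin θ₂) * (t * Real.sin θ₁ + s * Real.sin θ₂) =
      t ^ 2 + s ^ 2 + 2 * t * s * Real.cos (θ₁ - θ₂) := by
    linear_combination t ^ 2 * h3 + s ^ 2 * h4 - 2 * t * s * h2
  rw [hRHS, h1]
  have hts4 : t * s ≤ 1 / 4 := by nlinarith [sq_nonneg (t - s)]
  nlinarith [mul_nonneg (sub_nonneg.2 h5) (by linarith : (0:ℝ) ≤ 1 / 4 - t * s)]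

lemma aux_eq (θ₁ θ₂ : ℝ) :
    Complex.exp (Complex.I * θ₁) + Complex.exp (Complex.I * θ₂) =
      Complex.exp (Complex.I * (((θ₁ + θ₂) / 2 : ℝ) : ℂ)) *
        (2 * ((Real.cos ((θ₁ - θ₂) / 2) : ℝ) : ℂ)) := by
  rw [Complex.ofReal_cos, Complex.cos]
  rw [show ((((θ₁ - θ₂) / 2 : ℝ) : ℂ) * Complex.I) = Complex.I * (((θ₁ - θ₂) / 2 : ℝ) : ℂ) from
    mul_comm _ _]
  rw [mul_comm (2:ℂ), div_mul_cancel₀]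
  · rw [mul_add, ← Complex.exp_add, ← Complex.exp_add]
    congr 2
    · push_cast; ring
    · push_cast; ring
  · norm_num

/-- For a 2×2 unitary V with eigenvalues e^{iθ₁}, e^{iθ₂} and |θ₁ − θ₂| ≤ π, the
minimum of |⟨ψ, Vψ⟩| over unit vectors ψ exists and equals cos((θ₁ − θ₂)/2): it is
the distance from the origin to the numerical range of V. -/
theorem min_abs_numericalRange_unitary
    (θ₁ θ₂ : ℝ) (hθ : |θ₁ - θ₂| ≤ Real.pi)
    (V : Matrix (Fin 2) (Fin 2) ℂ) (hV : V ∈ Matrix.unitaryGroup (Fin 2) ℂ)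
    (hspec : spectrum ℂ V = {Complex.exp (Complex.I * θ₁), Complex.exp (Complex.I * θ₂)}) :
    IsLeast {r : ℝ | ∃ ψ : Fin 2 → ℂ,
        star ψ ⬝ᵥ ψ = 1 ∧ r = ‖star ψ ⬝ᵥ (V *ᵥ ψ)‖}
      (Real.cos ((θ₁ - θ₂) / 2)) := by
  set l₁ : ℂ := Complex.exp (Complex.I * θ₁) with hl₁
  set l₂ : ℂ := Complex.exp (Complex.I * θ₂) with hl₂
  have hU : star V * V = 1 := hV.1
  have hpres : ∀ x y : Fin 2 → ℂ, star (V *ᵥ x) ⬝ᵥ (V *ᵥ y) = star x ⬝ᵥ y := by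
    intro x y
    rw [Matrix.star_mulVec, Matrix.dotProduct_mulVec, Matrix.vecMul_vecMul,
      ← Matrix.star_eq_conjTranspose, hU, Matrix.vecMul_one]
  have hl₁ne : l₁ ≠ 0 := Complex.exp_ne_zero _
  have hl₂ne : l₂ ≠ 0 := Complex.exp_ne_zero _
  have hsl₁ : star l₁ * l₁ = 1 := by
    rw [Complex.star_def, ← Complex.normSq_eq_conj_mul_self, hl₁]
    norm_cast
    simp [Complex.normSq_eq_norm_sq, Complex.norm_exp]
  have hL1mem : l₁ ∈ spectrum ℂ V := by rw [hspec]; exact Set.mem_insert _ _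
  have hL2mem : l₂ ∈ spectrum ℂ V := by rw [hspec]; exact Set.mem_insert_iff.2 (Or.inr rfl)
  obtain ⟨w, hw0, hw⟩ := eigen_exists V l₁ hL1mem
  set v : Fin 2 → ℂ := ![-(starRingEnd ℂ) (w 1), (starRingEnd ℂ) (w 0)] with hvdef
  have hv0 : v ≠ 0 := by
    intro h
    apply hw0
    funext i
    have h0 := congrFun h 0
    have h1 := congrFun h 1
    simp [hvdef] at h0 h1
    fin_cases i <;> simp [h0, h1]
  have how : star w ⬝ᵥ v = 0 := by
    simp [hvdef, dotProduct, Fin.sum_univ_two, Complex.star_def]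
    ring
  have how' : star v ⬝ᵥ w = 0 := by
    simp [hvdef, dotProduct, Fin.sum_univ_two, Complex.star_def]
    ring
  have hVv_orth : star w ⬝ᵥ (V *ᵥ v) = 0 := by
    have h := hpres w v
    rw [hw, how] at h
    rw [star_smul, smul_dotProduct, smul_eq_mul] at h
    have : star l₁ ≠ 0 := by simpa [Complex.star_def] using hl₁ne
    exact (mul_eq_zero.1 h).resolve_left this
  obtain ⟨c, hc⟩ := ortho_span w hw0 _ hVv_orth
  rw [← hvdef] at hc
  have hcmem : c ∈ spectrum ℂ V := mem_spectrum_of_eigen V c v hv0 hc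
  rw [hspec, Set.mem_insert_iff, Set.mem_singleton_iff] at hcmem
  have hVv : V *ᵥ v = l₂ • v := by
    rcases hcmem with hcl | hcl
    · by_cases hl : l₁ = l₂
      · rw [hc, hcl, hl]
      · exfalso
        obtain ⟨w₂, hw₂0, hw₂⟩ := eigen_exists V l₂ hL2mem
        have horth : star w ⬝ᵥ w₂ = 0 := by
          have h := hpres w w₂
          rw [hw, hw₂, star_smul, smul_dotProduct, dotProduct_smul, smul_eq_mul,
            smul_eq_mul] at h
          have hne1 : star l₁ * l₂ ≠ 1 := by
            intro h1
            apply hl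
            have : star l₁ ≠ 0 := by simpa [Complex.star_def] using hl₁ne
            exact mul_left_cancel₀ this (by rw [hsl₁, h1])
          have h0 : (star l₁ * l₂ - 1) * (star w ⬝ᵥ w₂) = 0 := by linear_combination h
          rcases mul_eq_zero.1 h0 with h1 | h1
          · exact absurd (sub_eq_zero.1 h1) hne1
          · exact h1
        obtain ⟨d, hd⟩ := ortho_span w hw0 w₂ horth
        rw [← hvdef] at hd
        have hd0 : d ≠ 0 := by
          intro h; apply hw₂0; rw [hd, h, zero_smul]
        have : l₂ • w₂ = l₁ • w₂ := by
          rw [← hw₂, hd, Matrix.mulVec_smul, hc, hcl, smul_comm]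
        have h2 : (l₂ - l₁) • w₂ = 0 := by rw [sub_smul, this, sub_self]
        rcases smul_eq_zero.1 h2 with h3 | h3
        · exact hl (sub_eq_zero.1 h3).symm
        · exact hw₂0 h3
    · rw [hc, hcl]
  -- norms
  set Nw : ℝ := Complex.normSq (w 0) + Complex.normSq (w 1) with hNwdef
  set Nv : ℝ := Complex.normSq (v 0) + Complex.normSq (v 1) with hNvdef
  have hNw : star w ⬝ᵥ w = (Nw : ℂ) := dot_self_real w
  have hNv : star v ⬝ᵥ v = (Nv : ℂ) := dot_self_real v
  have hNwpos : 0 < Nw := normSq_sum_pos w hw0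
  have hNvpos : 0 < Nv := normSq_sum_pos v hv0
  have hpsi : ∀ a b : ℂ, star (a • w + b • v) ⬝ᵥ (a • w + b • v) =
      ((Complex.normSq a * Nw + Complex.normSq b * Nv : ℝ) : ℂ) := by
    intro a b
    simp only [star_add, star_smul, add_dotProduct, dotProduct_add, smul_dotProduct,
      dotProduct_smul, how, how', hNw, hNv, smul_eq_mul, mul_zero, add_zero, zero_add,
      Complex.star_def, Complex.ofReal_add, Complex.ofReal_mul, Complex.normSq_eq_conj_mul_self]
    ring
  have hval : ∀ a b : ℂ, star (a • w + b • v) ⬝ᵥ (V *ᵥ (a • w + b • v)) =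
      ((Complex.normSq a * Nw : ℝ) : ℂ) * l₁ + ((Complex.normSq b * Nv : ℝ) : ℂ) * l₂ := by
    intro a b
    rw [Matrix.mulVec_add, Matrix.mulVec_smul, Matrix.mulVec_smul, hw, hVv]
    simp only [star_add, star_smul, add_dotProduct, dotProduct_add, smul_dotProduct,
      dotProduct_smul, how, how', hNw, hNv, smul_eq_mul, mul_zero, add_zero, zero_add,
      Complex.star_def, Complex.ofReal_mul, Complex.normSq_eq_conj_mul_self]
    ring
  constructor
  · -- membership : achieved at a•w + b•v with a = 1/sqrt(2 Nw), b = 1/sqrt(2 Nv)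
    set a : ℂ := (((Real.sqrt (2 * Nw))⁻¹ : ℝ) : ℂ) with hadef
    set b : ℂ := (((Real.sqrt (2 * Nv))⁻¹ : ℝ) : ℂ) with hbdef
    have hta : Complex.normSq a * Nw = 1 / 2 := by
      rw [hadef, Complex.normSq_ofReal]
      rw [← mul_inv, Real.mul_self_sqrt (by linarith)]
      field_simp
    have htb : Complex.normSq b * Nv = 1 / 2 := by
      rw [hbdef, Complex.normSq_ofReal]
      rw [← mul_inv, Real.mul_self_sqrt (by linarith)]
      field_simp
    refine ⟨a • w + b • v, ?_, ?_⟩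
    · rw [hpsi, hta, htb]; norm_num
    · rw [hval, hta, htb]
      have hc : 0 ≤ Real.cos ((θ₁ - θ₂) / 2) := by
        apply Real.cos_nonneg_of_mem_Icc
        constructor
        · have := neg_le_of_abs_le hθ; linarith
        · have := le_of_abs_le hθ; linarith
      have hsum := aux_eq θ₁ θ₂
      have hval2 : ((1 / 2 : ℝ) : ℂ) * l₁ + ((1 / 2 : ℝ) : ℂ) * l₂ =
          Complex.exp (Complex.I * (((θ₁ + θ₂) / 2 : ℝ) : ℂ)) *
            ((Real.cos ((θ₁ - θ₂) / 2) : ℝ) : ℂ) := by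
        rw [hl₁, hl₂]
        push_cast at hsum ⊢
        linear_combination hsum / 2
      rw [hval2, norm_mul, Complex.norm_exp, Complex.norm_real, Real.norm_eq_abs, abs_of_nonneg hc]
      simp
  · rintro r ⟨ψ, hψ1, rfl⟩
    set a : ℂ := (star w ⬝ᵥ ψ) / (Nw : ℂ) with hadef
    have horthw : star w ⬝ᵥ (ψ - a • w) = 0 := by
      rw [dotProduct_sub, dotProduct_smul, hNw, hadef, smul_eq_mul, div_mul_cancel₀, sub_self]
      exact_mod_cast hNwpos.ne'
    obtain ⟨b, hb⟩ := ortho_span w hw0 _ horthw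
    rw [← hvdef] at hb
    have hψab : ψ = a • w + b • v := by
      rw [← hb, add_sub_cancel]
    rw [hψab] at hψ1
    rw [hψab, hval]
    rw [hpsi] at hψ1
    have hts : Complex.normSq a * Nw + Complex.normSq b * Nv = 1 := by
      exact_mod_cast hψ1
    exact aux_lb θ₁ θ₂ hθ _ _ (mul_nonneg (Complex.normSq_nonneg _) hNwpos.le)
      (mul_nonneg (Complex.normSq_nonneg _) hNvpos.le) hts
end

section
/- Let θ₁, θ₂ ∈ ℝ with |θ₁ − θ₂| ≤ π, and let V be a 2×2 unitary complex matrix whose eigenvalues are e^{iθ₁} and e^{iθ₂}. Then the maximum of 1 − |⟨ψ, Vψ⟩|² over unit vectors ψ ∈ ℂ² exists and equals sin²((θ₁ − θ₂)/2); consequently the optimal equal-prior single-shot Helstrom success probability ½(1 + max_ψ √(1 − |⟨ψ, Vψ⟩|²)) for distinguishing the identity from V equals ½(1 + sin(|θ₁ − θ₂|/2)). -/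
open Matrix ComplexConjugate

lemma eig_iff (V : Matrix (Fin 2) (Fin 2) ℂ) (κ : ℂ) :
    κ ∈ spectrum ℂ V ↔ ∃ v : Fin 2 → ℂ, v ≠ 0 ∧ V *ᵥ v = κ • v := by
  have key : ∀ v : Fin 2 → ℂ,
      (algebraMap ℂ (Matrix (Fin 2) (Fin 2) ℂ) κ - V) *ᵥ v = κ • v - V *ᵥ v := by
    intro v
    rw [Algebra.algebraMap_eq_smul_one, Matrix.sub_mulVec, Matrix.smul_mulVec,
      Matrix.one_mulVec]
  rw [spectrum.mem_iff, Matrix.isUnit_iff_isUnit_det, isUnit_iff_ne_zero, not_not,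
    ← Matrix.exists_mulVec_eq_zero_iff]
  constructor
  · rintro ⟨v, hv, h⟩
    rw [key, sub_eq_zero] at h
    exact ⟨v, hv, h.symm⟩
  · rintro ⟨v, hv, h⟩
    exact ⟨v, hv, by rw [key, h, sub_self]⟩

lemma unitary_dot {V : Matrix (Fin 2) (Fin 2) ℂ} (hV : V ∈ Matrix.unitaryGroup (Fin 2) ℂ)
    (a b : Fin 2 → ℂ) : star (V *ᵥ a) ⬝ᵥ (V *ᵥ b) = star a ⬝ᵥ b := by
  rw [Matrix.star_mulVec, Matrix.dotProduct_mulVec, Matrix.vecMul_vecMul,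
    ← Matrix.star_eq_conjTranspose, hV.1, Matrix.vecMul_one]

lemma abs_combo (s t θ₁ θ₂ : ℝ) :
    ‖(s : ℂ) * Complex.exp (Complex.I * θ₁) + (t : ℂ) * Complex.exp (Complex.I * θ₂)‖ ^ 2
      = s ^ 2 + t ^ 2 + 2 * s * t * Real.cos (θ₁ - θ₂) := by
  rw [Complex.sq_norm, mul_comm Complex.I (θ₁ : ℂ), mul_comm Complex.I (θ₂ : ℂ),
    Complex.exp_mul_I, Complex.exp_mul_I, Real.cos_sub]
  simp [Complex.normSq_apply, Complex.cos_ofReal_re, Complex.sin_ofReal_re]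
  · linear_combination s ^ 2 * (Real.sin_sq_add_cos_sq θ₁) + t ^ 2 * (Real.sin_sq_add_cos_sq θ₂)

lemma abs_sin_eq {x : ℝ} (hx : |x| ≤ Real.pi) : |Real.sin x| = Real.sin |x| := by
  rcases le_or_gt 0 x with h | h
  · rw [abs_of_nonneg h,
      abs_of_nonneg (Real.sin_nonneg_of_nonneg_of_le_pi h (by rwa [abs_of_nonneg h] at hx))]
  · have h1 : (0:ℝ) ≤ -x := by linarith
    have h2 : -x ≤ Real.pi := by rwa [abs_of_neg h] at hx
    have h3 : 0 ≤ Real.sin (-x) := Real.sin_nonneg_of_nonneg_of_le_pi h1 h2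
    rw [Real.sin_neg] at h3
    rw [abs_of_neg h, Real.sin_neg, abs_of_nonpos (by linarith)]

/-- For a 2×2 unitary V with eigenvalues e^{iθ₁}, e^{iθ₂} and |θ₁ − θ₂| ≤ π, the
maximum of 1 − |⟨ψ, Vψ⟩|² over unit vectors ψ exists and equals sin²((θ₁ − θ₂)/2);
consequently the optimal equal-prior single-shot Helstrom success probability
½(1 + max_ψ √(1 − |⟨ψ, Vψ⟩|²)) equals ½(1 + sin(|θ₁ − θ₂|/2)). -/
theorem helstrom_success_unitary
    (θ₁ θ₂ : ℝ) (hθ : |θ₁ - θ₂| ≤ Real.pi)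
    (V : Matrix (Fin 2) (Fin 2) ℂ) (hV : V ∈ Matrix.unitaryGroup (Fin 2) ℂ)
    (hspec : spectrum ℂ V = {Complex.exp (Complex.I * θ₁), Complex.exp (Complex.I * θ₂)}) :
    IsGreatest {r : ℝ | ∃ ψ : Fin 2 → ℂ,
        star ψ ⬝ᵥ ψ = 1 ∧ r = 1 - ‖star ψ ⬝ᵥ (V *ᵥ ψ)‖ ^ 2}
      (Real.sin ((θ₁ - θ₂) / 2) ^ 2) ∧
    (1 / 2) * (1 + sSup {r : ℝ | ∃ ψ : Fin 2 → ℂ,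
        star ψ ⬝ᵥ ψ = 1 ∧ r = Real.sqrt (1 - ‖star ψ ⬝ᵥ (V *ᵥ ψ)‖ ^ 2)}) =
      (1 / 2) * (1 + Real.sin (|θ₁ - θ₂| / 2)) := by
  have dotexp : ∀ a b : Fin 2 → ℂ, star a ⬝ᵥ b = conj (a 0) * b 0 + conj (a 1) * b 1 := by
    intro a b
    simp [dotProduct, Fin.sum_univ_two, Complex.star_def]
  have mvexp : ∀ (y : Fin 2 → ℂ) (i : Fin 2), (V *ᵥ y) i = V i 0 * y 0 + V i 1 * y 1 := by
    intro y i
    simp [Matrix.mulVec, dotProduct, Fin.sum_univ_two]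
  set l₁ := Complex.exp (Complex.I * θ₁) with hl₁
  set l₂ := Complex.exp (Complex.I * θ₂) with hl₂
  -- eigenvector for l₁
  have hmem1 : l₁ ∈ spectrum ℂ V := by rw [hspec]; exact Set.mem_insert _ _
  obtain ⟨v, hv0, hVv⟩ := (eig_iff V l₁).mp hmem1
  -- normalize
  have hn : 0 < Complex.normSq (v 0) + Complex.normSq (v 1) := by
    rcases Function.ne_iff.mp hv0 with ⟨i, hi⟩
    simp only [Pi.zero_apply] at hi
    fin_cases i
    · exact add_pos_of_pos_of_nonneg (Complex.normSq_pos.mpr hi) (Complex.normSq_nonneg _)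
    · exact add_pos_of_nonneg_of_pos (Complex.normSq_nonneg _) (Complex.normSq_pos.mpr hi)
  set n : ℝ := Real.sqrt (Complex.normSq (v 0) + Complex.normSq (v 1)) with hndef
  have hnpos : 0 < n := Real.sqrt_pos.mpr hn
  set u : Fin 2 → ℂ := ((n : ℂ))⁻¹ • v with hudef
  have hVu : V *ᵥ u = l₁ • u := by
    rw [hudef, Matrix.mulVec_smul, hVv, smul_comm]
  have hz : ∀ z : ℂ, conj z * z = ((Complex.normSq z : ℝ) : ℂ) := fun z => by
    rw [mul_comm, Complex.mul_conj]
  have hu : conj (u 0) * u 0 + conj (u 1) * u 1 = 1 := by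
    have h0 : ∀ i, conj (u i) * u i = ((Complex.normSq (v i) / (n * n) : ℝ) : ℂ) := by
      intro i
      rw [hz, hudef]
      simp only [Pi.smul_apply, smul_eq_mul]
      rw [Complex.normSq_mul, Complex.normSq_inv, Complex.normSq_ofReal]
      push_cast
      ring
    rw [h0, h0, ← Complex.ofReal_add]
    rw [← add_div, Real.mul_self_sqrt hn.le, div_self hn.ne']
    norm_num
  set w : Fin 2 → ℂ := ![-(conj (u 1)), conj (u 0)] with hwdef
  have hw0v : w 0 = -(conj (u 1)) := rfl
  have hw1v : w 1 = conj (u 0) := rfl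
  -- orthonormality
  have huw : conj (u 0) * w 0 + conj (u 1) * w 1 = 0 := by
    rw [hw0v, hw1v]; ring
  have hwu : conj (w 0) * u 0 + conj (w 1) * u 1 = 0 := by
    rw [hw0v, hw1v, map_neg, Complex.conj_conj, Complex.conj_conj]; ring
  have hww : conj (w 0) * w 0 + conj (w 1) * w 1 = 1 := by
    rw [hw0v, hw1v, map_neg, Complex.conj_conj, Complex.conj_conj]
    linear_combination hu
  -- completeness relations
  have comp00 : conj (u 0) * u 0 + conj (w 0) * w 0 = 1 := by
    rw [hw0v, map_neg, Complex.conj_conj]; linear_combination hu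
  have comp01 : conj (u 0) * u 1 + conj (w 0) * w 1 = 0 := by
    rw [hw0v, hw1v, map_neg, Complex.conj_conj]; ring
  have comp10 : conj (u 1) * u 0 + conj (w 1) * w 0 = 0 := by
    rw [hw0v, hw1v, Complex.conj_conj]; ring
  have comp11 : conj (u 1) * u 1 + conj (w 1) * w 1 = 1 := by
    rw [hw1v, Complex.conj_conj]; linear_combination hu
  -- decomposition in the orthonormal basis
  have hdecomp : ∀ (y : Fin 2 → ℂ) (i : Fin 2),
      y i = (conj (u 0) * y 0 + conj (u 1) * y 1) * u i
          + (conj (w 0) * y 0 + conj (w 1) * y 1) * w i := by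
    intro y i
    have hi : i = 0 ∨ i = 1 := by omega
    rcases hi with rfl | rfl
    · linear_combination (-(y 0)) * comp00 + (-(y 1)) * comp10
    · linear_combination (-(y 0)) * comp01 + (-(y 1)) * comp11
  -- scalar eigen equation for u
  have hui : ∀ i, V i 0 * u 0 + V i 1 * u 1 = l₁ * u i := by
    intro i
    have h := congrFun hVu i
    rw [mvexp] at h
    simpa using h
  -- w is an eigenvector
  have hwne : w ≠ 0 := by
    intro h
    have h0 := congrFun h 0
    have h1 := congrFun h 1
    rw [hw0v] at h0
    rw [hw1v] at h1
    simp only [Pi.zero_apply, neg_eq_zero] at h0 h1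
    rw [h0, h1] at hu
    simp at hu
  obtain ⟨μ, hμdef⟩ : ∃ μ : ℂ, μ = conj (w 0) * (V *ᵥ w) 0 + conj (w 1) * (V *ᵥ w) 1 := ⟨_, rfl⟩
  have hx0 : conj (u 0) * (V *ᵥ w) 0 + conj (u 1) * (V *ᵥ w) 1 = 0 := by
    have h := unitary_dot hV u w
    rw [hVu, star_smul, smul_dotProduct, dotexp, dotexp, huw] at h
    have hne : star l₁ ≠ 0 := star_ne_zero.mpr (Complex.exp_ne_zero _)
    rcases mul_eq_zero.mp h with h' | h'
    · exact absurd h' hne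
    · exact h'
  have hVw : V *ᵥ w = μ • w := by
    funext i
    have h := hdecomp (V *ᵥ w) i
    rw [hx0] at h
    rw [← hμdef] at h
    rw [h, Pi.smul_apply, smul_eq_mul]
    ring
  have hwi : ∀ i, V i 0 * w 0 + V i 1 * w 1 = μ * w i := by
    intro i
    have h := congrFun hVw i
    rw [mvexp] at h
    simpa using h
  -- μ = l₂
  have hμspec : μ = l₁ ∨ μ = l₂ := by
    have : μ ∈ spectrum ℂ V := (eig_iff V μ).mpr ⟨w, hwne, hVw⟩
    rw [hspec] at this
    simpa using this
  have hμ : μ = l₂ := by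
    by_cases hone : l₁ = l₂
    · rcases hμspec with h | h
      · exact h.trans hone
      · exact h
    · obtain ⟨z, hz0, hVz⟩ := (eig_iff V l₂).mp (by
        rw [hspec]; exact Set.mem_insert_iff.mpr (Or.inr rfl))
      have hzi : ∀ i, V i 0 * z 0 + V i 1 * z 1 = l₂ * z i := by
        intro i
        have h := congrFun hVz i
        rw [mvexp] at h
        simpa using h
      obtain ⟨a, hadef⟩ : ∃ a : ℂ, a = conj (u 0) * z 0 + conj (u 1) * z 1 := ⟨_, rfl⟩
      obtain ⟨b, hbdef⟩ : ∃ b : ℂ, b = conj (w 0) * z 0 + conj (w 1) * z 1 := ⟨_, rfl⟩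
      have hzdec : ∀ i, z i = a * u i + b * w i := by
        intro i
        rw [hadef, hbdef]
        exact hdecomp z i
      have heig : ∀ i, a * (l₁ * u i) + b * (μ * w i) = l₂ * (a * u i + b * w i) := by
        intro i
        linear_combination (-a) * hui i - b * hwi i + hzi i - V i 0 * hzdec 0
          - V i 1 * hzdec 1 + l₂ * hzdec i
      have ha : a * l₁ = l₂ * a := by
        linear_combination conj (u 0) * heig 0 + conj (u 1) * heig 1
          + (l₂ * a - a * l₁) * hu + (l₂ * b - b * μ) * huw
      have hb : b * μ = l₂ * b := by
        linear_combination conj (w 0) * heig 0 + conj (w 1) * heig 1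
          + (l₂ * a - a * l₁) * hwu + (l₂ * b - b * μ) * hww
      have ha0 : a = 0 := by
        have h : a * (l₁ - l₂) = 0 := by linear_combination ha
        rcases mul_eq_zero.mp h with h' | h'
        · exact h'
        · exact absurd (sub_eq_zero.mp h') hone
      have hb0 : b ≠ 0 := by
        intro hb0
        apply hz0
        funext i
        rw [Pi.zero_apply, hzdec i, ha0, hb0]
        ring
      have := mul_right_cancel₀ hb0 (show μ * b = l₂ * b by linear_combination hb)
      exact this
  rw [hμ] at hwi
  -- quadratic form for arbitrary unit vectors
  have key : ∀ ψ : Fin 2 → ℂ, star ψ ⬝ᵥ ψ = 1 →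
      ∃ s t : ℝ, 0 ≤ s ∧ 0 ≤ t ∧ s + t = 1 ∧
        star ψ ⬝ᵥ (V *ᵥ ψ) = (s : ℂ) * l₁ + (t : ℂ) * l₂ := by
    intro ψ hψ
    obtain ⟨a, hadef⟩ : ∃ a : ℂ, a = conj (u 0) * ψ 0 + conj (u 1) * ψ 1 := ⟨_, rfl⟩
    obtain ⟨b, hbdef⟩ : ∃ b : ℂ, b = conj (w 0) * ψ 0 + conj (w 1) * ψ 1 := ⟨_, rfl⟩
    have hψdec : ∀ i, ψ i = a * u i + b * w i := by
      intro i; rw [hadef, hbdef]; exact hdecomp ψ i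
    have h1 : conj (ψ 0) * ψ 0 + conj (ψ 1) * ψ 1 = 1 := by rw [← dotexp]; exact hψ
    have hca : conj a = u 0 * conj (ψ 0) + u 1 * conj (ψ 1) := by
      rw [hadef]
      simp only [map_add, _root_.map_mul, Complex.conj_conj]
    have hcb : conj b = w 0 * conj (ψ 0) + w 1 * conj (ψ 1) := by
      rw [hbdef]
      simp only [map_add, _root_.map_mul, Complex.conj_conj]
    have hcψ : ∀ i, conj (ψ i) = conj a * conj (u i) + conj b * conj (w i) := by
      intro i
      rw [hψdec i]
      simp only [map_add, _root_.map_mul]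
    have hpar : a * conj a + b * conj b = 1 := by
      rw [hca, hcb, hadef, hbdef]
      linear_combination (ψ 0 * conj (ψ 0)) * comp00 + (ψ 0 * conj (ψ 1)) * comp01
        + (ψ 1 * conj (ψ 0)) * comp10 + (ψ 1 * conj (ψ 1)) * comp11 + h1
    have hVψ : ∀ i, (V *ᵥ ψ) i = a * (l₁ * u i) + b * (l₂ * w i) := by
      intro i
      rw [mvexp, hψdec 0, hψdec 1]
      linear_combination a * hui i + b * hwi i
    have hform : star ψ ⬝ᵥ (V *ᵥ ψ) = (a * conj a) * l₁ + (b * conj b) * l₂ := by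
      rw [dotexp, hVψ 0, hVψ 1, hcψ 0, hcψ 1]
      linear_combination (conj a * a * l₁) * hu + (conj a * b * l₂) * huw
        + (conj b * a * l₁) * hwu + (conj b * b * l₂) * hww
    refine ⟨Complex.normSq a, Complex.normSq b, Complex.normSq_nonneg _,
      Complex.normSq_nonneg _, ?_, ?_⟩
    · have h2 := hpar
      rw [Complex.mul_conj, Complex.mul_conj, ← Complex.ofReal_add] at h2
      exact_mod_cast h2
    · rw [hform, Complex.mul_conj, Complex.mul_conj]
  -- value of the objective
  have val : ∀ s t : ℝ, s + t = 1 →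
      1 - ‖(s : ℂ) * l₁ + (t : ℂ) * l₂‖ ^ 2
        = 4 * s * t * Real.sin ((θ₁ - θ₂) / 2) ^ 2 := by
    intro s t hst
    rw [hl₁, hl₂, abs_combo]
    have hsin := Real.sin_sq_eq_half_sub ((θ₁ - θ₂) / 2)
    rw [show 2 * ((θ₁ - θ₂) / 2) = θ₁ - θ₂ by ring] at hsin
    linear_combination (-4 * s * t) * hsin + (-(1 + s + t)) * hst
  -- the optimal state
  obtain ⟨c, hcdef⟩ : ∃ c : ℝ, c = (Real.sqrt 2)⁻¹ := ⟨_, rfl⟩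
  have hc2r : c ^ 2 = 1 / 2 := by
    rw [hcdef, inv_pow, Real.sq_sqrt (by norm_num : (0:ℝ) ≤ 2)]
    norm_num
  have hc2 : (c : ℂ) ^ 2 = 1 / 2 := by
    rw [← Complex.ofReal_pow, hc2r]
    push_cast
    ring
  obtain ⟨ψ₀, hψ₀def⟩ : ∃ ψ₀ : Fin 2 → ℂ, ψ₀ = fun i => (c : ℂ) * (u i + w i) := ⟨_, rfl⟩
  have hψ₀i : ∀ i, ψ₀ i = (c : ℂ) * (u i + w i) := fun i => by rw [hψ₀def]
  have hψ₀u : star ψ₀ ⬝ᵥ ψ₀ = 1 := by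
    rw [dotexp, hψ₀i 0, hψ₀i 1]
    simp only [_root_.map_mul, map_add, Complex.conj_ofReal]
    linear_combination ((c:ℂ)^2) * hu + ((c:ℂ)^2) * huw + ((c:ℂ)^2) * hwu
      + ((c:ℂ)^2) * hww + 2 * hc2
  have hψ₀V : star ψ₀ ⬝ᵥ (V *ᵥ ψ₀) = ((1/2 : ℝ) : ℂ) * l₁ + ((1/2 : ℝ) : ℂ) * l₂ := by
    have hV0 : ∀ i, (V *ᵥ ψ₀) i = (c:ℂ) * (l₁ * u i + l₂ * w i) := by
      intro i
      rw [mvexp, hψ₀i 0, hψ₀i 1]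
      linear_combination (c:ℂ) * hui i + (c:ℂ) * hwi i
    rw [dotexp, hV0 0, hV0 1, hψ₀i 0, hψ₀i 1]
    simp only [_root_.map_mul, map_add, Complex.conj_ofReal]
    push_cast
    linear_combination ((c:ℂ)^2 * l₁) * hu + ((c:ℂ)^2 * l₂) * huw + ((c:ℂ)^2 * l₁) * hwu
      + ((c:ℂ)^2 * l₂) * hww + (l₁ + l₂) * hc2
  -- part 1
  have hG1 : IsGreatest {r : ℝ | ∃ ψ : Fin 2 → ℂ,
      star ψ ⬝ᵥ ψ = 1 ∧ r = 1 - ‖star ψ ⬝ᵥ (V *ᵥ ψ)‖ ^ 2}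
      (Real.sin ((θ₁ - θ₂) / 2) ^ 2) := by
    constructor
    · exact ⟨ψ₀, hψ₀u, by rw [hψ₀V, val (1/2) (1/2) (by norm_num)]; ring⟩
    · rintro r ⟨ψ, hψ1, rfl⟩
      obtain ⟨s, t, hs, ht, hst, hform⟩ := key ψ hψ1
      rw [hform, val s t hst]
      have hs1 : s = 1 - t := by linarith
      rw [hs1]
      nlinarith [mul_nonneg (sq_nonneg (2 * t - 1)) (sq_nonneg (Real.sin ((θ₁ - θ₂) / 2)))]
  -- part 2
  have hG2 : IsGreatest {r : ℝ | ∃ ψ : Fin 2 → ℂ,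
      star ψ ⬝ᵥ ψ = 1 ∧ r = Real.sqrt (1 - ‖star ψ ⬝ᵥ (V *ᵥ ψ)‖ ^ 2)}
      (Real.sqrt (Real.sin ((θ₁ - θ₂) / 2) ^ 2)) := by
    constructor
    · refine ⟨ψ₀, hψ₀u, ?_⟩
      rw [hψ₀V, val (1/2) (1/2) (by norm_num)]
      congr 1
      ring
    · rintro r ⟨ψ, hψ1, rfl⟩
      exact Real.sqrt_le_sqrt (hG1.2 ⟨ψ, hψ1, rfl⟩)
  refine ⟨hG1, ?_⟩
  rw [hG2.csSup_eq, Real.sqrt_sq_eq_abs]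
  have h2 : |θ₁ - θ₂| / 2 = |(θ₁ - θ₂) / 2| := by
    rw [abs_div]
    norm_num
  have hx : |(θ₁ - θ₂) / 2| ≤ Real.pi := by
    rw [← h2]
    linarith [Real.pi_pos]
  rw [h2, ← abs_sin_eq hx]
end
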